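/- If the equilibrium is asymptotically stable at τ = 0 (all roots of P + Q have negative real parts) and the equation ω⁶ + a_F ω⁴ + b_F ω² + c_F = 0 has exactly one positive real root ω₀, then there exists τ₀ > 0 such that for all τ ∈ [0, τ₀) every root of P(λ) + e^{-λτ}Q(λ) = 0 has negative real part, and at τ = τ₀ there is a pair of purely imaginary roots ±iω₀; i.e., there is exactly one stability switch. -/

import Mathlib

/-!
Let `S` be the set of delays `τ ≥ 0` for which `P + e^{-λτ} Q` has a root in the closed right
half-plane. There `|e^{-λτ}| ≤ 1`, so these roots obey a Cauchy bound uniform in `τ`; hence `S` is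
closed. It is nonempty because `|P(iω₀)| = |Q(iω₀)|` lets one choose `τ` with
`e^{-iω₀τ} = -P(iω₀)/Q(iω₀)`, and its least element `τ₀` is positive by stability at `τ = 0`.
A root at `τ₀` lies on the imaginary axis, since by Hurwitz's theorem a root in the open half-plane
would persist for slightly smaller delays. A root `iy` forces `|P(iy)| = |Q(iy)|`, i.e. the sextic
vanishes at `y`, so `|y| = ω₀`; the conjugate root supplies the other sign.
-/

open Complex ComplexConjugate Metric Filter Topology Function Set

theorem norm_lt_of_cubic_eq_zero {c₀ c₁ c₂ z : ℂ} (h : z ^ 3 + c₂ * z ^ 2 + c₁ * z + c₀ = 0) :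
    ‖z‖ < 1 + ‖c₂‖ + ‖c₁‖ + ‖c₀‖ := by
  by_contra! hz
  have h₁ : 1 ≤ ‖z‖ := by linarith [norm_nonneg c₂, norm_nonneg c₁, norm_nonneg c₀]
  have h₂ : ‖z‖ ^ 3 ≤ ‖c₂‖ * ‖z‖ ^ 2 + ‖c₁‖ * ‖z‖ + ‖c₀‖ :=
    calc ‖z‖ ^ 3 = ‖c₂ * z ^ 2 + c₁ * z + c₀‖ := by
          rw [← norm_pow, ← norm_neg, show z ^ 3 = -(c₂ * z ^ 2 + c₁ * z + c₀) by
            linear_combination h, neg_neg]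
      _ ≤ _ := norm_add₃_le.trans (by simp only [norm_mul, norm_pow, le_refl])
  have h₃ : ‖c₁‖ * ‖z‖ + ‖c₀‖ ≤ (‖c₁‖ + ‖c₀‖) * ‖z‖ ^ 2 := by
    have : ‖z‖ ≤ ‖z‖ ^ 2 := by nlinarith
    nlinarith [mul_le_mul_of_nonneg_left this (norm_nonneg c₁),
      mul_le_mul_of_nonneg_left (h₁.trans this) (norm_nonneg c₀)]
  nlinarith [mul_le_mul_of_nonneg_right hz (sq_nonneg ‖z‖)]

theorem norm_lt_of_cubic_add_mul_quadratic_eq_zero {c₀ c₁ c₂ d₀ d₁ d₂ e z : ℂ} (he : ‖e‖ ≤ 1)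
    (h : z ^ 3 + c₂ * z ^ 2 + c₁ * z + c₀ + e * (d₂ * z ^ 2 + d₁ * z + d₀) = 0) :
    ‖z‖ < 1 + (‖c₂‖ + ‖d₂‖) + (‖c₁‖ + ‖d₁‖) + (‖c₀‖ + ‖d₀‖) := by
  have hc (c d : ℂ) : ‖c + e * d‖ ≤ ‖c‖ + ‖d‖ := (norm_add_le _ _).trans <| by
    rw [norm_mul]; gcongr; exact mul_le_of_le_one_left (norm_nonneg _) he
  have := norm_lt_of_cubic_eq_zero (z := z) (c₂ := c₂ + e * d₂) (c₁ := c₁ + e * d₁)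
    (c₀ := c₀ + e * d₀) (by linear_combination h)
  linarith [hc c₂ d₂, hc c₁ d₁, hc c₀ d₀]

theorem norm_exp_neg_mul_le_one {z : ℂ} {τ : ℝ} (hτ : 0 ≤ τ) (hz : 0 ≤ z.re) :
    ‖exp (-z * τ)‖ ≤ 1 := by
  rw [norm_exp, Real.exp_le_one_iff, neg_mul, neg_re, re_mul_ofReal, neg_nonpos]
  positivity

theorem exists_mem_closedBall_eq_zero_of_norm_lt_of_le_on_sphere {g : ℂ → ℂ} {z₀ : ℂ} {r m : ℝ}
    (hg : DiffContOnCl ℂ g (ball z₀ r)) (hr : 0 < r) (hz₀ : ‖g z₀‖ < m)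
    (hsphere : ∀ z ∈ sphere z₀ r, m ≤ ‖g z‖) : ∃ z ∈ closedBall z₀ r, g z = 0 := by
  by_contra! hne
  rw [← closure_ball z₀ hr.ne'] at hne
  have hm : 0 < m := (norm_nonneg _).trans_lt hz₀
  have := norm_le_of_forall_mem_frontier_norm_le isBounded_ball (hg.inv hne)
    (fun z hz => by
      rw [frontier_ball z₀ hr.ne'] at hz
      show ‖(g z)⁻¹‖ ≤ m⁻¹
      rw [norm_inv]; exact inv_anti₀ hm (hsphere z hz))
    (subset_closure (mem_ball_self hr))
  have hgz₀ : g z₀ ≠ 0 := hne _ (subset_closure (mem_ball_self hr))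
  rw [Pi.inv_apply, norm_inv, inv_le_inv₀ (norm_pos_iff.2 hgz₀) hm] at this
  linarith

theorem exists_pos_le_forall_mem_sphere_ne_zero {g : ℂ → ℂ} (hg : Differentiable ℂ g)
    (hne : ∃ w, g w ≠ 0) (z₀ : ℂ) {ε : ℝ} (hε : 0 < ε) :
    ∃ r, 0 < r ∧ r ≤ ε ∧ ∀ z ∈ sphere z₀ r, g z ≠ 0 := by
  obtain ⟨w, hw⟩ := hne
  rcases (hg.analyticAt z₀).eventually_eq_zero_or_eventually_ne_zero with hzero | hiso
  · have hg' := analyticOnNhd_univ_iff_differentiable.2 hg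
    exact absurd (hg'.eqOn_zero_of_preconnected_of_eventuallyEq_zero isPreconnected_univ
      (mem_univ z₀) hzero (mem_univ w)) hw
  obtain ⟨δ, hδ, hball⟩ := Metric.eventually_nhds_iff.1 (eventually_nhdsWithin_iff.1 hiso)
  refine ⟨min ε (δ / 2), lt_min hε (half_pos hδ), min_le_left _ _, fun z hz => hball ?_ ?_⟩
  · rw [mem_sphere.1 hz]; exact (min_le_right _ _).trans_lt (half_lt_self hδ)
  · rintro rfl; simp [(lt_min hε (half_pos hδ)).ne] at hz

theorem eventually_exists_mem_closedBall_eq_zero {X : Type*} [TopologicalSpace X]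
    {F : X → ℂ → ℂ} (hF : Continuous (uncurry F)) (hFd : ∀ t, Differentiable ℂ (F t))
    {t₀ : X} {z₀ : ℂ} (hz₀ : F t₀ z₀ = 0) (hne : ∃ w, F t₀ w ≠ 0) {ε : ℝ} (hε : 0 < ε) :
    ∀ᶠ t in 𝓝 t₀, ∃ z ∈ closedBall z₀ ε, F t z = 0 := by
  obtain ⟨r, hr, hrε, hsphere⟩ := exists_pos_le_forall_mem_sphere_ne_zero (hFd t₀) hne z₀ hε
  obtain ⟨w, hw, hmin⟩ := (isCompact_sphere z₀ r).exists_isMinOn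
    (NormedSpace.sphere_nonempty.2 hr.le) (hFd t₀).continuous.norm.continuousOn
  have hm : 0 < ‖F t₀ w‖ := norm_pos_iff.2 (hsphere w hw)
  obtain ⟨U, hU, hclose⟩ := (isCompact_closedBall z₀ r).mem_uniformity_of_prod
    hF.continuousOn (mem_univ t₀) (dist_mem_uniformity (half_pos hm))
  rw [nhdsWithin_univ] at hU
  filter_upwards [hU] with t ht
  have hclose' : ∀ z ∈ closedBall z₀ r, ‖F t z - F t₀ z‖ < ‖F t₀ w‖ / 2 :=
    fun z hz => by simpa [dist_eq_norm] using hclose t ht z hz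
  obtain ⟨z, hz, hFz⟩ := exists_mem_closedBall_eq_zero_of_norm_lt_of_le_on_sphere
    (hFd t).diffContOnCl hr (by simpa [hz₀] using hclose' z₀ (mem_closedBall_self hr.le))
    fun z hz => by
      have h₁ := hclose' z (sphere_subset_closedBall hz)
      have h₂ : ‖F t₀ w‖ ≤ ‖F t₀ z‖ := hmin hz
      linarith [norm_sub_norm_le (F t₀ z) (F t z), norm_sub_rev (F t z) (F t₀ z)]
  exact ⟨z, closedBall_subset_closedBall hrε hz, hFz⟩

theorem isClosed_setOf_exists_mem_eq_zero {X Y Z : Type*} [TopologicalSpace X]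
    [TopologicalSpace Y] [TopologicalSpace Z] [T1Space Z] [Zero Z] {F : X → Y → Z}
    (hF : Continuous (uncurry F)) {K : Set Y} (hK : IsCompact K) :
    IsClosed {t | ∃ y ∈ K, F t y = 0} := by
  have : CompactSpace K := isCompact_iff_compactSpace.mp hK
  have hproj : {t | ∃ y ∈ K, F t y = 0} = Prod.fst '' {p : X × K | F p.1 p.2 = 0} := by
    ext t
    simp
  rw [hproj]
  exact isClosedMap_fst_of_compactSpace _ (isClosed_singleton.preimage
    (hF.comp (continuous_fst.prodMk (continuous_subtype_val.comp continuous_snd))))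

theorem exists_first_imaginary_axis_root {F : ℝ → ℂ → ℂ} (hF : Continuous (uncurry F))
    (hFd : ∀ τ, Differentiable ℂ (F τ)) {R : ℝ}
    (hR : ∀ τ, 0 ≤ τ → ∀ z, 0 ≤ z.re → F τ z = 0 → ‖z‖ < R)
    (h₀ : ∀ z, F 0 z = 0 → z.re < 0) {τ₁ : ℝ} {z₁ : ℂ} (hτ₁ : 0 ≤ τ₁) (hz₁ : 0 ≤ z₁.re)
    (hF₁ : F τ₁ z₁ = 0) :
    ∃ τ₀, 0 < τ₀ ∧ (∀ τ, 0 ≤ τ → τ < τ₀ → ∀ z, F τ z = 0 → z.re < 0) ∧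
      ∃ y : ℝ, F τ₀ (I * y) = 0 := by
  set S := {τ | 0 ≤ τ ∧ ∃ z, 0 ≤ z.re ∧ F τ z = 0}
  have hS : S = Ici 0 ∩ {τ | ∃ z ∈ closedBall 0 R ∩ {z | 0 ≤ z.re}, F τ z = 0} := by
    ext τ
    constructor
    · rintro ⟨hτ, z, hz, hFz⟩
      exact ⟨hτ, z, ⟨mem_closedBall_zero_iff.2 (hR τ hτ z hz hFz).le, hz⟩, hFz⟩
    · rintro ⟨hτ, z, ⟨-, hz⟩, hFz⟩
      exact ⟨hτ, z, hz, hFz⟩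
  have hSclosed : IsClosed S := hS ▸ isClosed_Ici.inter (isClosed_setOf_exists_mem_eq_zero hF
    ((isCompact_closedBall 0 R).inter_right (isClosed_le continuous_const continuous_re)))
  have hSbdd : BddBelow S := ⟨0, fun τ hτ => hτ.1⟩
  obtain ⟨hτ₀, z₀, hz₀re, hz₀⟩ : sInf S ∈ S := hSclosed.csInf_mem ⟨τ₁, hτ₁, z₁, hz₁, hF₁⟩ hSbdd
  have hpos : 0 < sInf S := hτ₀.lt_of_ne fun h => (h₀ z₀ (h ▸ hz₀)).not_ge hz₀re
  refine ⟨sInf S, hpos, fun τ hτ hlt z hz => ?_, z₀.im, ?_⟩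
  · by_contra! hre
    exact hlt.not_ge (csInf_le hSbdd ⟨hτ, z, hre, hz⟩)
  suffices hre : z₀.re = 0 by
    rwa [show I * z₀.im = z₀ from Complex.ext (by simp [hre]) (by simp)]
  by_contra hre
  -- a real point beyond the root bound `R` is not a zero, so `F (sInf S)` is not identically zero
  have hne : ∃ w, F (sInf S) w ≠ 0 := ⟨((max R 0 : ℝ) : ℂ), fun h =>
    (hR _ hτ₀ _ (by simp) h).not_ge <| by
      rw [norm_real, Real.norm_eq_abs]; exact (le_max_left R 0).trans (le_abs_self _)⟩
  obtain ⟨τ, ⟨z, hz, hFz⟩, hτ, hτS⟩ := ((eventually_exists_mem_closedBall_eq_zero hF hFd hz₀ hne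
    (hz₀re.lt_of_ne' hre)).filter_mono nhdsWithin_le_nhds |>.and (Ioo_mem_nhdsLT hpos)).exists
  have hzre : 0 ≤ z.re := by
    have := (abs_re_le_norm (z - z₀)).trans (mem_closedBall_iff_norm.1 hz)
    rw [sub_re] at this
    linarith [neg_abs_le (z.re - z₀.re)]
  exact hτS.not_ge (csInf_le hSbdd ⟨hτ.le, z, hzre, hFz⟩)

theorem exists_nonneg_add_exp_mul_eq_zero {a b : ℂ} (hab : ‖a‖ = ‖b‖) (hb : b ≠ 0) {ω : ℝ}
    (hω : 0 < ω) : ∃ τ : ℝ, 0 ≤ τ ∧ a + exp (-(I * ω) * τ) * b = 0 := by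
  set w := -a / b
  have hw : ‖w‖ = 1 := by rw [norm_div, norm_neg, hab, div_self (norm_ne_zero_iff.2 hb)]
  refine ⟨(2 * Real.pi - arg w) / ω, div_nonneg (by linarith [arg_le_pi w, Real.pi_pos]) hω.le, ?_⟩
  have harg : -(I * ω) * ((2 * Real.pi - arg w) / ω : ℝ) = arg w * I - 2 * Real.pi * I := by
    have hω' : (ω : ℂ) ≠ 0 := ofReal_ne_zero.2 hω.ne'
    push_cast
    field_simp
    ring
  have hexp : exp (arg w * I) = w := by simpa [hw] using norm_mul_exp_arg_mul_I w
  rw [harg, exp_sub, exp_two_pi_mul_I, div_one, hexp, div_mul_cancel₀ _ hb, add_neg_cancel]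

theorem norm_eq_norm_of_add_exp_mul_eq_zero {a b : ℂ} {y τ : ℝ}
    (h : a + exp (-(I * y) * τ) * b = 0) : ‖a‖ = ‖b‖ := by
  rw [eq_neg_of_add_eq_zero_left h, norm_neg, norm_mul,
    show -(I * y) * τ = (-(y * τ) : ℝ) * I by push_cast; ring, norm_exp_ofReal_mul_I, one_mul]

theorem add_exp_mul_eq_zero_conj {P Q : ℂ → ℂ} (hP : ∀ z, P (conj z) = conj (P z))
    (hQ : ∀ z, Q (conj z) = conj (Q z)) {τ : ℝ} {z : ℂ} (h : P z + exp (-z * τ) * Q z = 0) :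
    P (conj z) + exp (-conj z * τ) * Q (conj z) = 0 := by
  rw [hP, hQ, ← conj_ofReal τ, ← map_neg, ← map_mul, exp_conj, ← map_mul, ← map_add, h,
    map_zero]

theorem norm_cubic_eq_norm_quadratic_iff (p₀ p₁ p₂ q₀ q₁ q₂ ω : ℝ) :
    ‖(I * ω) ^ 3 + (p₂ : ℂ) * (I * ω) ^ 2 + (p₁ : ℂ) * (I * ω) + (p₀ : ℂ)‖ =
        ‖(q₂ : ℂ) * (I * ω) ^ 2 + (q₁ : ℂ) * (I * ω) + (q₀ : ℂ)‖ ↔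
      ω ^ 6 + (p₂ ^ 2 - q₂ ^ 2 - 2 * p₁) * ω ^ 4 +
        (2 * q₀ * q₂ - 2 * p₀ * p₂ - q₁ ^ 2 + p₁ ^ 2) * ω ^ 2 + (p₀ ^ 2 - q₀ ^ 2) = 0 := by
  have key : normSq ((I * ω) ^ 3 + (p₂ : ℂ) * (I * ω) ^ 2 + (p₁ : ℂ) * (I * ω) + (p₀ : ℂ)) -
      normSq ((q₂ : ℂ) * (I * ω) ^ 2 + (q₁ : ℂ) * (I * ω) + (q₀ : ℂ)) =
      ω ^ 6 + (p₂ ^ 2 - q₂ ^ 2 - 2 * p₁) * ω ^ 4 +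
        (2 * q₀ * q₂ - 2 * p₀ * p₂ - q₁ ^ 2 + p₁ ^ 2) * ω ^ 2 + (p₀ ^ 2 - q₀ ^ 2) := by
    simp only [normSq_apply, add_re, add_im, mul_re, mul_im, pow_succ, pow_zero, one_mul, I_re,
      I_im, ofReal_re, ofReal_im]
    ring
  rw [← sq_eq_sq₀ (norm_nonneg _) (norm_nonneg _), Complex.sq_norm, Complex.sq_norm,
    ← sub_eq_zero, key]

/-- If the system is stable at τ = 0 and the sextic has exactly one positive root ω₀,
then there is exactly one stability switch: a τ₀ > 0 with stability for τ ∈ [0, τ₀)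
and purely imaginary roots ±iω₀ at τ = τ₀. -/
theorem single_stability_switch
    (p₀ p₁ p₂ q₀ q₁ q₂ : ℝ)
    (aF bF cF : ℝ)
    (haF : aF = p₂ ^ 2 - q₂ ^ 2 - 2 * p₁)
    (hbF : bF = 2 * q₀ * q₂ - 2 * p₀ * p₂ - q₁ ^ 2 + p₁ ^ 2)
    (hcF : cF = p₀ ^ 2 - q₀ ^ 2)
    (P Q : ℂ → ℂ)
    (hP : ∀ z, P z = z ^ 3 + (p₂ : ℂ) * z ^ 2 + (p₁ : ℂ) * z + (p₀ : ℂ))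
    (hQ : ∀ z, Q z = (q₂ : ℂ) * z ^ 2 + (q₁ : ℂ) * z + (q₀ : ℂ))
    (hstable0 : ∀ z : ℂ, P z + Q z = 0 → z.re < 0)
    (hPQ : ∀ ω : ℝ, P (Complex.I * ω) + Q (Complex.I * ω) ≠ 0)
    (ω₀ : ℝ)
    (huniq : (0 < ω₀ ∧ ω₀ ^ 6 + aF * ω₀ ^ 4 + bF * ω₀ ^ 2 + cF = 0) ∧
      ∀ ω : ℝ, 0 < ω → ω ^ 6 + aF * ω ^ 4 + bF * ω ^ 2 + cF = 0 → ω = ω₀) :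
    ∃ τ₀ : ℝ, 0 < τ₀ ∧
      (∀ τ : ℝ, 0 ≤ τ → τ < τ₀ →
        ∀ z : ℂ, P z + Complex.exp (-z * τ) * Q z = 0 → z.re < 0) ∧
      P (Complex.I * ω₀) + Complex.exp (-(Complex.I * ω₀) * τ₀) * Q (Complex.I * ω₀) = 0 ∧
      P (-(Complex.I * ω₀)) + Complex.exp ((Complex.I * ω₀) * τ₀) * Q (-(Complex.I * ω₀)) = 0 := by
  obtain ⟨⟨hω₀, hsextic₀⟩, huniq⟩ := huniq
  have hsextic (ω : ℝ) :
      ‖P (I * ω)‖ = ‖Q (I * ω)‖ ↔ ω ^ 6 + aF * ω ^ 4 + bF * ω ^ 2 + cF = 0 := by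
    rw [hP, hQ, haF, hbF, hcF]
    exact norm_cubic_eq_norm_quadratic_iff p₀ p₁ p₂ q₀ q₁ q₂ ω
  have hQω₀ : Q (I * ω₀) ≠ 0 := fun h => hPQ ω₀ <| by
    rw [h, add_zero, ← norm_eq_zero, (hsextic ω₀).2 hsextic₀, h, norm_zero]
  obtain ⟨τ₁, hτ₁, hroot₁⟩ := exists_nonneg_add_exp_mul_eq_zero ((hsextic ω₀).2 hsextic₀) hQω₀ hω₀
  obtain ⟨τ₀, hτ₀, hstable, y, hy⟩ := exists_first_imaginary_axis_root
    (F := fun τ z => P z + exp (-z * τ) * Q z)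
    (by simp only [hP, hQ]; fun_prop) (fun τ => by simp only [hP, hQ]; fun_prop)
    (fun τ hτ z hz h => norm_lt_of_cubic_add_mul_quadratic_eq_zero
      (norm_exp_neg_mul_le_one hτ hz) (hP z ▸ hQ z ▸ h))
    (by simpa using hstable0) hτ₁ (by simp) hroot₁
  have hy₀ : y ≠ 0 := by rintro rfl; exact hPQ 0 (by simpa using hy)
  have hsextic_y := (hsextic y).1 (norm_eq_norm_of_add_exp_mul_eq_zero hy)
  have hyω₀ : |y| = ω₀ := huniq |y| (abs_pos.2 hy₀) <| by
    rcases abs_choice y with h | h <;> rw [h] <;> linear_combination hsextic_y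
  have hconj : P (-(I * y)) + exp (I * y * τ₀) * Q (-(I * y)) = 0 := by
    simpa using add_exp_mul_eq_zero_conj (fun z => by simp [hP]) (fun z => by simp [hQ]) hy
  refine ⟨τ₀, hτ₀, hstable, ?_⟩
  rcases abs_choice y with h | h <;> rw [h] at hyω₀ <;> subst hyω₀
  · exact ⟨hy, by simpa using hconj⟩
  · push_cast
    exact ⟨by simpa using hconj, by simpa using hy⟩
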